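/- arXiv:2404.17656 — 9 statements merged into one kernel-verified Lean document; each statement's English description precedes it below -/
import Mathlib

section
/- Let R be a commutative ring, G ∈ M₂(R) unimodular, and E ∈ M₂(R) such that G and GE are congruent modulo R·det(G). Then GE is unimodular if and only if E is unimodular. -/
/-!
Write `I(M)` for the ideal generated by the entries of `M`. Always `I(GE) ≤ I(E)`. Conversely
`det G • E = adj G * (G * E)`, so `det G · I(E) ≤ I(GE)`; if `E` is unimodular this puts `det G`
in `I(GE)`, and then the congruence `GE ≡ G mod det G` gives `I(G) ≤ I(GE)`.
-/

open Matrix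

namespace Matrix

variable {m n p R : Type*} [CommRing R]

def entryIdeal (M : Matrix m n R) : Ideal R :=
  Ideal.span (Set.range fun ij : m × n => M ij.1 ij.2)

theorem entry_mem_entryIdeal (M : Matrix m n R) (i : m) (j : n) : M i j ∈ M.entryIdeal :=
  Ideal.subset_span ⟨(i, j), rfl⟩

theorem entryIdeal_le_iff {M : Matrix m n R} {I : Ideal R} :
    M.entryIdeal ≤ I ↔ ∀ i j, M i j ∈ I := by
  simp [entryIdeal, Ideal.span_le, Set.range_subset_iff]

theorem entryIdeal_fin_two (M : Matrix (Fin 2) (Fin 2) R) :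
    M.entryIdeal = Ideal.span {M 0 0, M 0 1, M 1 0, M 1 1} := by
  unfold entryIdeal
  congr 1
  ext x
  simp [Prod.exists, Fin.exists_fin_two, eq_comm, or_assoc]

theorem entryIdeal_mul_le_right [Fintype n] (A : Matrix m n R) (B : Matrix n p R) :
    (A * B).entryIdeal ≤ B.entryIdeal :=
  entryIdeal_le_iff.2 fun _ j =>
    Ideal.sum_mem _ fun k _ => Ideal.mul_mem_left _ _ (B.entry_mem_entryIdeal k j)

theorem span_singleton_mul_entryIdeal_le (c : R) (M : Matrix m n R) :
    Ideal.span {c} * M.entryIdeal ≤ (c • M).entryIdeal := by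
  rw [entryIdeal, entryIdeal, Ideal.span_mul_span', Set.singleton_mul, Ideal.span_le]
  rintro _ ⟨_, ⟨ij, rfl⟩, rfl⟩
  exact (c • M).entry_mem_entryIdeal ij.1 ij.2

theorem span_det_le_entryIdeal_mul [Fintype n] [DecidableEq n] (A B : Matrix n n R)
    (hB : B.entryIdeal = ⊤) : Ideal.span {A.det} ≤ (A * B).entryIdeal :=
  calc Ideal.span {A.det} = Ideal.span {A.det} * B.entryIdeal := by rw [hB, Ideal.mul_top]
    _ ≤ (A.det • B).entryIdeal := span_singleton_mul_entryIdeal_le _ _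
    _ = (A.adjugate * (A * B)).entryIdeal := by
      rw [← Matrix.mul_assoc, adjugate_mul, smul_mul, Matrix.one_mul]
    _ ≤ (A * B).entryIdeal := entryIdeal_mul_le_right _ _

theorem entryIdeal_mul_eq_top_iff [Fintype n] [DecidableEq n] {G E : Matrix n n R}
    (hG : G.entryIdeal = ⊤) (hcong : ∀ i j, (G * E) i j - G i j ∈ Ideal.span {G.det}) :
    (G * E).entryIdeal = ⊤ ↔ E.entryIdeal = ⊤ := by
  refine ⟨fun h => top_unique (h ▸ entryIdeal_mul_le_right G E), fun hE => ?_⟩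
  have hdet := span_det_le_entryIdeal_mul G E hE
  rw [eq_top_iff, ← hG, entryIdeal_le_iff]
  intro i j
  simpa using sub_mem ((G * E).entry_mem_entryIdeal i j) (hdet (hcong i j))

end Matrix

theorem stmt2 {R : Type*} [CommRing R] (G E : Matrix (Fin 2) (Fin 2) R)
    (hG : Ideal.span {G 0 0, G 0 1, G 1 0, G 1 1} = (⊤ : Ideal R))
    (hcong : ∀ i j, (G * E) i j - G i j ∈ Ideal.span {G.det}) :
    Ideal.span {(G * E) 0 0, (G * E) 0 1, (G * E) 1 0, (G * E) 1 1} = (⊤ : Ideal R) ↔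
      Ideal.span {E 0 0, E 0 1, E 1 0, E 1 1} = (⊤ : Ideal R) := by
  simp only [← entryIdeal_fin_two] at hG ⊢
  exact entryIdeal_mul_eq_top_iff hG hcong
end

section
/- Let R be a commutative ring, A = [[a,b],[c,d]] ∈ M₂(R) unimodular with det(A) not a zero divisor in R. If there exists C ∈ M₂(R) with det(C) = 0 and det(A + det(A)·C) = 0, then there exists (x,y,z,w) ∈ R⁴ with ax + by + cz + dw = 1 and xw − yz = 0. -/
/-! Expanding `det (A + t • C)` for `2 × 2` matrices gives
`det A + t * tr (adj C * A) + t² * det C`. With `t = det A` and `det C = 0` the hypothesis becomes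
`det A * (1 + tr (adj C * A)) = 0`, so `tr (adj C * A) = -1` because `det A` is not a zero divisor.
The entries of `-(adj C)ᵀ` then solve `a x + b y + c z + d w = 1`, and `x w - y z = det (adj C) = det C = 0`. -/

open Matrix

namespace Matrix

variable {R : Type*} [CommRing R]

theorem det_add_smul_fin_two (A C : Matrix (Fin 2) (Fin 2) R) (t : R) :
    (A + t • C).det = A.det + t * (C.adjugate * A).trace + t ^ 2 * C.det := by
  simp only [det_fin_two, adjugate_fin_two, trace_fin_two, mul_apply, Fin.sum_univ_two, add_apply,
    smul_apply, smul_eq_mul, of_apply, cons_val', cons_val_zero, cons_val_one, empty_val',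
    cons_val_fin_one]
  ring

theorem trace_adjugate_mul_eq_neg_one {A C : Matrix (Fin 2) (Fin 2) R}
    (hA : ∀ s : R, A.det * s = 0 → s = 0) (hC : C.det = 0) (hB : (A + A.det • C).det = 0) :
    (C.adjugate * A).trace = -1 := by
  rw [det_add_smul_fin_two, hC] at hB
  exact eq_neg_of_add_eq_zero_right (hA _ (by linear_combination hB))

end Matrix

theorem stmt4_general {R : Type*} [CommRing R] (a b c d : R)
    (hnz : ∀ s : R, (a * d - b * c) * s = 0 → s = 0)
    (C : Matrix (Fin 2) (Fin 2) R) (hC : C.det = 0)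
    (hB : ((!![a, b; c, d] : Matrix (Fin 2) (Fin 2) R) + (a * d - b * c) • C).det = 0) :
    ∃ x y z w : R, a * x + b * y + c * z + d * w = 1 ∧ x * w - y * z = 0 := by
  have hdet : (!![a, b; c, d] : Matrix (Fin 2) (Fin 2) R).det = a * d - b * c := det_fin_two_of ..
  have htr := trace_adjugate_mul_eq_neg_one (hdet ▸ hnz) hC (hdet ▸ hB)
  simp only [trace_fin_two, adjugate_fin_two, mul_apply, Fin.sum_univ_two, of_apply, cons_val',
    cons_val_zero, cons_val_one, empty_val', cons_val_fin_one] at htr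
  rw [det_fin_two] at hC
  exact ⟨-C 1 1, C 1 0, C 0 1, -C 0 0, by linear_combination -htr, by linear_combination hC⟩

theorem stmt4 {R : Type*} [CommRing R] (a b c d : R)
    (hA : Ideal.span {a, b, c, d} = (⊤ : Ideal R))
    (hnz : ∀ s : R, (a * d - b * c) * s = 0 → s = 0)
    (C : Matrix (Fin 2) (Fin 2) R) (hC : C.det = 0)
    (hB : ((!![a, b; c, d] : Matrix (Fin 2) (Fin 2) R) + (a * d - b * c) • C).det = 0) :
    ∃ x y z w : R, a * x + b * y + c * z + d * w = 1 ∧ x * w - y * z = 0 :=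
  stmt4_general a b c d hnz C hC hB
end

section
/- Let R be a commutative ring and A = [[a,b],[c,d]] ∈ M₂(R). If A is simply extendable, i.e., there exists (x,y,z,w) ∈ R⁴ with axw + bxz + cyw + dyz = 1, then A is determinant liftable: there exists a unimodular B ∈ M₂(R) congruent to A modulo R·det(A) with det(B) = 0. -/
/-!
For `u, v ∈ R²` put `⟨A⟩ := vᵀ · adj(A) · u`. With `u = (y, -x)` and `v = (z, -w)` this is the
form `a x w + b x z + c y w + d y z`, so simple extendability says `⟨A⟩ = 1`. Take the rank-one
correction `B := A - det(A) • u vᵀ`. Then `B ≡ A` modulo `det A`, and by the matrix determinant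
lemma `det B = det A · (1 - ⟨A⟩) = 0`. Since `adj` is linear on 2 × 2 matrices and `adj(u vᵀ) u = 0`,
`⟨B⟩ = ⟨A⟩ = 1`; as `⟨B⟩` is a linear combination of the entries of `B`, `B` is unimodular.
-/

open Matrix

section

variable {R : Type*} [CommRing R]

theorem dotProduct_adjugate_mulVec_fin_two (M : Matrix (Fin 2) (Fin 2) R) (u v : Fin 2 → R) :
    v ⬝ᵥ (adjugate M *ᵥ u) =
      u 1 * v 1 * M 0 0 - u 1 * v 0 * M 0 1 - u 0 * v 1 * M 1 0 + u 0 * v 0 * M 1 1 := by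
  simp only [adjugate_fin_two, dotProduct, mulVec, Fin.sum_univ_two, of_apply, cons_val',
    cons_val_zero, cons_val_one, cons_val_fin_one]
  ring

theorem dotProduct_adjugate_mulVec_mem_span_entries (M : Matrix (Fin 2) (Fin 2) R)
    (u v : Fin 2 → R) :
    v ⬝ᵥ (adjugate M *ᵥ u) ∈ Ideal.span {M 0 0, M 0 1, M 1 0, M 1 1} := by
  have hM : ∀ i j, M i j ∈ Ideal.span {M 0 0, M 0 1, M 1 0, M 1 1} := by
    intro i j
    fin_cases i <;> fin_cases j <;> exact Ideal.subset_span (by simp)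
  rw [dotProduct_adjugate_mulVec_fin_two]
  exact add_mem (sub_mem (sub_mem (Ideal.mul_mem_left _ _ (hM 0 0))
    (Ideal.mul_mem_left _ _ (hM 0 1))) (Ideal.mul_mem_left _ _ (hM 1 0)))
    (Ideal.mul_mem_left _ _ (hM 1 1))

section RankOneCorrection

variable {n : Type*} [Fintype n] [DecidableEq n]

def rankOneCorrection (A : Matrix n n R) (u v : n → R) : Matrix n n R :=
  A - A.det • vecMulVec u v

theorem rankOneCorrection_sub_mem_span_det (A : Matrix n n R) (u v : n → R) (i j : n) :
    rankOneCorrection A u v i j - A i j ∈ Ideal.span {A.det} :=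
  Ideal.mem_span_singleton'.mpr ⟨-(u i * v j), by
    simp only [rankOneCorrection, Matrix.sub_apply, Matrix.smul_apply, vecMulVec_apply, smul_eq_mul]
    ring⟩

theorem det_rankOneCorrection_fin_two (A : Matrix (Fin 2) (Fin 2) R) (u v : Fin 2 → R) :
    (rankOneCorrection A u v).det = A.det * (1 - v ⬝ᵥ (adjugate A *ᵥ u)) := by
  simp only [det_fin_two, dotProduct_adjugate_mulVec_fin_two, rankOneCorrection, Matrix.sub_apply,
    Matrix.smul_apply, vecMulVec_apply, smul_eq_mul]
  ring

theorem dotProduct_adjugate_rankOneCorrection_mulVec_fin_two (A : Matrix (Fin 2) (Fin 2) R)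
    (u v : Fin 2 → R) :
    v ⬝ᵥ (adjugate (rankOneCorrection A u v) *ᵥ u) = v ⬝ᵥ (adjugate A *ᵥ u) := by
  simp only [dotProduct_adjugate_mulVec_fin_two, rankOneCorrection, Matrix.sub_apply,
    Matrix.smul_apply, vecMulVec_apply, smul_eq_mul]
  ring

end RankOneCorrection

end

theorem stmt5 {R : Type*} [CommRing R] (a b c d : R)
    (h : ∃ x y z w : R, a * x * w + b * x * z + c * y * w + d * y * z = 1) :
    ∃ B : Matrix (Fin 2) (Fin 2) R,
      Ideal.span {B 0 0, B 0 1, B 1 0, B 1 1} = (⊤ : Ideal R) ∧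
      (∀ i j, B i j - (!![a, b; c, d] : Matrix (Fin 2) (Fin 2) R) i j ∈
        Ideal.span {a * d - b * c}) ∧
      B.det = 0 := by
  obtain ⟨x, y, z, w, hext⟩ := h
  set A : Matrix (Fin 2) (Fin 2) R := !![a, b; c, d]
  have hpair : ![z, -w] ⬝ᵥ (adjugate A *ᵥ ![y, -x]) = 1 := by
    simp only [dotProduct_adjugate_mulVec_fin_two, A, of_apply, cons_val', cons_val_zero,
      cons_val_one, cons_val_fin_one]
    linear_combination hext
  have hdet : A.det = a * d - b * c := det_fin_two_of a b c d
  refine ⟨rankOneCorrection A ![y, -x] ![z, -w], ?_, ?_, ?_⟩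
  · rw [Ideal.eq_top_iff_one, ← hpair,
      ← dotProduct_adjugate_rankOneCorrection_mulVec_fin_two]
    exact dotProduct_adjugate_mulVec_mem_span_entries _ _ _
  · rw [← hdet]
    exact rankOneCorrection_sub_mem_span_det A _ _
  · rw [det_rankOneCorrection_fin_two, hpair, sub_self, mul_zero]
end

section
/- Let R be a commutative ring and A = [[a,b],[c,d]] ∈ M₂(R). A is simply extendable (there exists a 3×3 matrix over R of determinant 1 whose upper-left 2×2 block is A and whose (3,3) entry is 0) if and only if there exists (x,y,z,w) ∈ R⁴ such that axw + bxz + cyw + dyz = 1. -/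
open Matrix

theorem det_simpleExtension {R : Type*} [CommRing R] (a b c d x y z w : R) :
    (!![a, b, y; c, d, -x; -z, w, 0] : Matrix (Fin 3) (Fin 3) R).det =
      a * x * w + b * x * z + c * y * w + d * y * z := by
  rw [det_fin_three]
  simp only [of_apply, cons_val', cons_val_zero, cons_val_one, cons_val_two, empty_val',
    cons_val_fin_one, head_cons, tail_cons, head_fin_const]
  ring

theorem stmt6 {R : Type*} [CommRing R] (a b c d : R) :
    (∃ x y z w : R, (!![a, b, y; c, d, -x; -z, w, 0] : Matrix (Fin 3) (Fin 3) R).det = 1) ↔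
      ∃ x y z w : R, a * x * w + b * x * z + c * y * w + d * y * z = 1 := by
  simp only [det_simpleExtension]
end

section
/- Let R be a commutative ring and A = [[a,b],[c,d]] ∈ M₂(R). A is extendable (embeds as upper-left 2×2 block of some 3×3 matrix of determinant 1) if and only if there exists (x,y,z,w,v) ∈ R⁵ such that axw + bxz + cyw + dyz + (ad − bc)v = 1. -/
open Matrix

theorem det_bordered_two_by_two {R : Type*} [CommRing R] (a b c d x y z w v : R) :
    (!![a, b, y; c, d, -x; -z, w, v] : Matrix (Fin 3) (Fin 3) R).det =
      a * x * w + b * x * z + c * y * w + d * y * z + (a * d - b * c) * v := by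
  rw [det_fin_three]
  simp only [of_apply, cons_val', cons_val_zero, cons_val_one, cons_val_two, empty_val',
    cons_val_fin_one, head_cons, tail_cons, head_fin_const]
  ring

theorem stmt7 {R : Type*} [CommRing R] (a b c d : R) :
    (∃ x y z w v : R, (!![a, b, y; c, d, -x; -z, w, v] : Matrix (Fin 3) (Fin 3) R).det = 1) ↔
      ∃ x y z w v : R,
        a * x * w + b * x * z + c * y * w + d * y * z + (a * d - b * c) * v = 1 := by
  simp only [det_bordered_two_by_two]
end

section
/- Let R be a commutative ring and A ∈ M₂(R) unimodular such that A is weakly determinant liftable and det(A) is not a zero divisor. Then there exists (x,y,z,w) ∈ R⁴ with 1 − ax − by − cz − dw + (ad−bc)(xw − yz) = 0, where A = [[a,b],[c,d]]. -/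
/-!
Write `δ = det A` and `B = A + δ • X`. Expanding the determinant of a sum of `2 × 2` matrices,
`0 = det B = δ (1 + tr (adj A · X) + δ det X)`, and since `δ` is a non-zero-divisor the bracket
vanishes. With `X = [[x, y], [z, w]]` the bracket is `1 + a w - b z - c y + d x + δ (x w - y z)`,
which is the required identity at `(-w, z, y, -x)`.
-/

open Matrix

theorem Matrix.exists_eq_add_smul_of_sub_mem_span_singleton {R m n : Type*} [CommRing R]
    {A B : Matrix m n R} {t : R} (h : ∀ i j, B i j - A i j ∈ Ideal.span {t}) :
    ∃ X : Matrix m n R, B = A + t • X := by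
  choose X hX using fun i j => Ideal.mem_span_singleton.mp (h i j)
  refine ⟨Matrix.of X, ?_⟩
  ext i j
  simp only [add_apply, smul_apply, of_apply, smul_eq_mul]
  linear_combination hX i j

theorem Matrix.det_add_smul_fin_two_s12 {R : Type*} [CommRing R] (A X : Matrix (Fin 2) (Fin 2) R)
    (t : R) : (A + t • X).det = A.det + t * (A.adjugate * X).trace + t ^ 2 * X.det := by
  simp only [det_fin_two, adjugate_fin_two, trace_fin_two, mul_apply, Fin.sum_univ_two, add_apply,
    smul_apply, smul_eq_mul, of_apply, cons_val', cons_val_zero, cons_val_one, empty_val',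
    cons_val_fin_one]
  ring

theorem stmt12_general {R : Type*} [CommRing R] (a b c d : R)
    (hnz : ∀ s : R, (a * d - b * c) * s = 0 → s = 0)
    (hw : ∃ B : Matrix (Fin 2) (Fin 2) R,
      (∀ i j, B i j - (!![a, b; c, d] : Matrix (Fin 2) (Fin 2) R) i j ∈
        Ideal.span {a * d - b * c}) ∧ B.det = 0) :
    ∃ x y z w : R,
      1 - a * x - b * y - c * z - d * w + (a * d - b * c) * (x * w - y * z) = 0 := by
  obtain ⟨B, hB, hdet⟩ := hw
  obtain ⟨X, rfl⟩ := exists_eq_add_smul_of_sub_mem_span_singleton hB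
  have hdetA : (!![a, b; c, d] : Matrix (Fin 2) (Fin 2) R).det = a * d - b * c := det_fin_two_of ..
  rw [det_add_smul_fin_two_s12, hdetA] at hdet
  refine ⟨-X 1 1, X 1 0, X 0 1, -X 0 0, hnz _ ?_⟩
  simp only [adjugate_fin_two_of, trace_fin_two, mul_apply, Fin.sum_univ_two, of_apply, cons_val',
    cons_val_zero, cons_val_one, empty_val', cons_val_fin_one, det_fin_two] at hdet
  linear_combination hdet

theorem stmt12 {R : Type*} [CommRing R] (a b c d : R)
    (hA : Ideal.span {a, b, c, d} = (⊤ : Ideal R))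
    (hnz : ∀ s : R, (a * d - b * c) * s = 0 → s = 0)
    (hw : ∃ B : Matrix (Fin 2) (Fin 2) R,
      (∀ i j, B i j - (!![a, b; c, d] : Matrix (Fin 2) (Fin 2) R) i j ∈
        Ideal.span {a * d - b * c}) ∧ B.det = 0) :
    ∃ x y z w : R,
      1 - a * x - b * y - c * z - d * w + (a * d - b * c) * (x * w - y * z) = 0 :=
  stmt12_general a b c d hnz hw
end

section
/- Let R be a commutative ring and A = [[a,b],[c,d]] ∈ M₂(R) unimodular. If there exists (x,y,z,w) ∈ R⁴ with 1 − ax − by − cz − dw + (ad−bc)(xw − yz) = 0, then A is weakly determinant liftable. -/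
/-!
With `δ = det A` and a solution `X = !![x, z; y, w]`, the matrix `A - δ • adj X` is congruent to `A`
modulo `δ`, and its determinant is `δ * (1 - tr (X * A) + δ * det X) = 0`.
-/

open Matrix

namespace Matrix

variable {R : Type*} [CommRing R]

theorem det_fin_two_sub_smul_adjugate (A X : Matrix (Fin 2) (Fin 2) R) (t : R) :
    (A - t • adjugate X).det = A.det - t * trace (X * A) + t ^ 2 * X.det := by
  simp only [det_fin_two, adjugate_fin_two, trace_fin_two, sub_apply, smul_apply, mul_apply,
    Fin.sum_univ_two, of_apply, cons_val', cons_val_zero, cons_val_one, empty_val',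
    cons_val_fin_one, smul_eq_mul]
  ring

theorem exists_det_eq_zero_of_one_sub_trace_add_det_mul_det_eq_zero
    (A X : Matrix (Fin 2) (Fin 2) R) (hX : 1 - trace (X * A) + A.det * X.det = 0) :
    ∃ B : Matrix (Fin 2) (Fin 2) R,
      (∀ i j, B i j - A i j ∈ Ideal.span {A.det}) ∧ B.det = 0 := by
  refine ⟨A - A.det • adjugate X, fun i j => ?_, ?_⟩
  · rw [sub_apply, smul_apply, smul_eq_mul, sub_sub_cancel_left, Ideal.neg_mem_iff]
    exact Ideal.mul_mem_right _ _ (Ideal.mem_span_singleton_self _)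
  · rw [det_fin_two_sub_smul_adjugate]
    linear_combination A.det * hX

end Matrix

theorem stmt13_general {R : Type*} [CommRing R] (a b c d : R)
    (h : ∃ x y z w : R,
      1 - a * x - b * y - c * z - d * w + (a * d - b * c) * (x * w - y * z) = 0) :
    ∃ B : Matrix (Fin 2) (Fin 2) R,
      (∀ i j, B i j - (!![a, b; c, d] : Matrix (Fin 2) (Fin 2) R) i j ∈
        Ideal.span {a * d - b * c}) ∧ B.det = 0 := by
  obtain ⟨x, y, z, w, hxyzw⟩ := h
  have hX : 1 - trace (!![x, z; y, w] * !![a, b; c, d])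
      + (!![a, b; c, d]).det * (!![x, z; y, w]).det = 0 := by
    simp only [trace_fin_two, det_fin_two_of, mul_fin_two, of_apply, cons_val', cons_val_zero,
      cons_val_one, empty_val', cons_val_fin_one]
    linear_combination hxyzw
  simpa only [det_fin_two_of] using exists_det_eq_zero_of_one_sub_trace_add_det_mul_det_eq_zero _ _ hX

theorem stmt13 {R : Type*} [CommRing R] (a b c d : R)
    (hA : Ideal.span {a, b, c, d} = (⊤ : Ideal R))
    (h : ∃ x y z w : R,
      1 - a * x - b * y - c * z - d * w + (a * d - b * c) * (x * w - y * z) = 0) :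
    ∃ B : Matrix (Fin 2) (Fin 2) R,
      (∀ i j, B i j - (!![a, b; c, d] : Matrix (Fin 2) (Fin 2) R) i j ∈
        Ideal.span {a * d - b * c}) ∧ B.det = 0 :=
  stmt13_general a b c d h
end

section
/- Let R be a commutative ring in which every 2×2 matrix of zero determinant is non-full, i.e., factors as a column vector times a row vector. If A ∈ M₂(R) is unimodular and weakly determinant liftable, then A is extendable. -/
open Matrix

/-!
Reduce modulo `Δ = ad - bc`. There `A` becomes the rank-one matrix `(l, m)ᵀ (o, q)` of a
determinant-zero lift, and its entries still generate the unit ideal, so `(l, m)` and `(o, q)`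
are unimodular rows: `x l + y m = 1 = o w + q z`. Then
`[x y] A [w z]ᵀ = (x l + y m)(o w + q z) = 1` modulo `Δ`, and the error is absorbed by `Δ v`.
-/

section RankOne

variable {S : Type*} [CommRing S] {l m o q : S}

theorem span_products_le_span_left :
    Ideal.span {l * o, l * q, m * o, m * q} ≤ Ideal.span {l, m} := by
  simp only [Ideal.span_le, Set.insert_subset_iff, Set.singleton_subset_iff, SetLike.mem_coe]
  refine ⟨?_, ?_, ?_, ?_⟩ <;> apply Ideal.mul_mem_right <;> apply Ideal.subset_span <;> simp

theorem span_products_le_span_right :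
    Ideal.span {l * o, l * q, m * o, m * q} ≤ Ideal.span {o, q} := by
  simp only [Ideal.span_le, Set.insert_subset_iff, Set.singleton_subset_iff, SetLike.mem_coe]
  refine ⟨?_, ?_, ?_, ?_⟩ <;> apply Ideal.mul_mem_left <;> apply Ideal.subset_span <;> simp

theorem exists_rankOne_form_eq_one (h : Ideal.span {l * o, l * q, m * o, m * q} = ⊤) :
    ∃ x y z w : S, l * o * x * w + l * q * x * z + m * o * y * w + m * q * y * z = 1 := by
  have hlm : (1 : S) ∈ Ideal.span {l, m} := span_products_le_span_left (h ▸ Submodule.mem_top)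
  have hoq : (1 : S) ∈ Ideal.span {o, q} := span_products_le_span_right (h ▸ Submodule.mem_top)
  obtain ⟨x, y, hxy⟩ := Ideal.mem_span_pair.1 hlm
  obtain ⟨w, z, hwz⟩ := Ideal.mem_span_pair.1 hoq
  exact ⟨x, y, z, w, by linear_combination (w * o + z * q) * hxy + hwz⟩

end RankOne

theorem exists_add_mul_eq_one_of_mk_eq_one {R : Type*} [CommRing R] {e Δ : R}
    (h : Ideal.Quotient.mk (Ideal.span {Δ}) e = 1) : ∃ v, e + Δ * v = 1 := by
  rw [← map_one (Ideal.Quotient.mk _), Ideal.Quotient.eq, Ideal.mem_span_singleton'] at h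
  obtain ⟨v, hv⟩ := h
  exact ⟨-v, by linear_combination -hv⟩

theorem stmt14 {R : Type*} [CommRing R]
    (hfull : ∀ N : Matrix (Fin 2) (Fin 2) R, N.det = 0 →
      ∃ l m o q : R, N = !![l * o, l * q; m * o, m * q])
    (a b c d : R)
    (hA : Ideal.span {a, b, c, d} = (⊤ : Ideal R))
    (hw : ∃ B : Matrix (Fin 2) (Fin 2) R,
      (∀ i j, B i j - (!![a, b; c, d] : Matrix (Fin 2) (Fin 2) R) i j ∈
        Ideal.span {a * d - b * c}) ∧ B.det = 0) :
    ∃ x y z w v : R,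
      a * x * w + b * x * z + c * y * w + d * y * z + (a * d - b * c) * v = 1 := by
  obtain ⟨B, hcong, hdet⟩ := hw
  obtain ⟨l, m, o, q, rfl⟩ := hfull B hdet
  have hB (i j) := Ideal.Quotient.eq.2 (hcong i j)
  simp only [Fin.forall_fin_two, of_apply, cons_val', cons_val_zero, cons_val_one,
    empty_val', cons_val_fin_one, map_mul] at hB
  obtain ⟨⟨hlo, hlq⟩, hmo, hmq⟩ := hB
  set π := Ideal.Quotient.mk (Ideal.span {a * d - b * c})
  have hspan : Ideal.span {π l * π o, π l * π q, π m * π o, π m * π q} = ⊤ := by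
    simpa only [Ideal.map_span, Ideal.map_top, Set.image_insert_eq, Set.image_singleton,
      ← hlo, ← hlq, ← hmo, ← hmq] using congrArg (Ideal.map π) hA
  obtain ⟨x, y, z, w, hform⟩ := exists_rankOne_form_eq_one hspan
  obtain ⟨x, rfl⟩ := Ideal.Quotient.mk_surjective x
  obtain ⟨y, rfl⟩ := Ideal.Quotient.mk_surjective y
  obtain ⟨z, rfl⟩ := Ideal.Quotient.mk_surjective z
  obtain ⟨w, rfl⟩ := Ideal.Quotient.mk_surjective w
  rw [hlo, hlq, hmo, hmq] at hform
  exact ⟨x, y, z, w,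
    exists_add_mul_eq_one_of_mk_eq_one (by simpa only [map_add, map_mul] using hform)⟩
end

section
/- Let R be a commutative ring and i an ideal contained in the Jacobson radical of R. Then the natural map Pic(R) → Pic(R/i) induced by reduction modulo i is injective. Moreover, if i consists of nilpotent elements (i ⊆ nilradical of R), this map is an isomorphism. -/
/-!
Both parts rest on one fact: if `I ⊆ Jac(R)` and `M`, `N` are finitely generated projective
`R`-modules with `M/IM ≅ N/IN`, then `M ≅ N`. Lift the isomorphism to `f : M → N` using
projectivity of `M`; `f` is surjective by Nakayama, hence split since `N` is projective, and its
kernel is a finitely generated direct summand `K` of `M` with `K ⊆ IM`, so `K = IK` and `K = 0`.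
Invertible modules are finitely generated projective, which gives injectivity.

For surjectivity when `I` is nil, write an invertible `R/I`-module `P` as the image of an
idempotent matrix; idempotents lift along the nil ideal `Mₙ(I)`, so `P` lifts to a finitely
generated projective `R`-module `M`. Lifting a tensor inverse `Q` of `P` to `N` in the same way,
`M ⊗ N` reduces to `R/I`, hence is isomorphic to `R` by the first part.
-/

open TensorProduct

/-- An `R`-module (bundled as an object of `ModuleCat R`) is invertible if it admits a
tensor inverse, i.e., it represents an element of the Picard group `Pic(R)`. -/
def IsInvertibleModule (R : Type u) [CommRing R] (M : ModuleCat.{u} R) : Prop :=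
  ∃ N : ModuleCat.{u} R, Nonempty ((M ⊗[R] N) ≃ₗ[R] R)

section Nakayama
variable {R : Type*} [CommRing R] {I : Ideal R} {M N : Type*}
  [AddCommGroup M] [Module R M] [AddCommGroup N] [Module R N]

theorem LinearMap.ker_eq_bot_of_ker_le_smul_top [Module.Finite R M]
    (hI : I ≤ (⊥ : Ideal R).jacobson) {f : M →ₗ[R] N} {s : N →ₗ[R] M}
    (hfs : f ∘ₗ s = LinearMap.id)
    (hker : LinearMap.ker f ≤ I • ⊤) : LinearMap.ker f = ⊥ := by
  set r : M →ₗ[R] M := LinearMap.id - s ∘ₗ f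
  have hr : LinearMap.range r = LinearMap.ker f := by
    apply le_antisymm
    · rintro _ ⟨x, rfl⟩
      simp [r, ← LinearMap.comp_apply f s, hfs]
    · intro x hx
      exact ⟨x, by simp [r, LinearMap.mem_ker.mp hx]⟩
  refine Submodule.eq_bot_of_le_smul_of_le_jacobson_bot I _
    (by rw [← hr, LinearMap.range_eq_map]; exact Module.Finite.fg_top.map r) (fun x hx ↦ ?_) hI
  have hrx : r x = x := by simp [r, LinearMap.mem_ker.mp hx]
  rw [← hr, ← hrx, LinearMap.range_eq_map, ← Submodule.map_smul'']
  exact Submodule.mem_map_of_mem (hker hx)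

theorem nonempty_linearEquiv_of_quotSMulTop [Module.Finite R M] [Module.Projective R M]
    [Module.Finite R N] [Module.Projective R N] (hI : I ≤ (⊥ : Ideal R).jacobson)
    (e : (M ⧸ I • (⊤ : Submodule R M)) ≃ₗ[R] N ⧸ I • (⊤ : Submodule R N)) :
    Nonempty (M ≃ₗ[R] N) := by
  obtain ⟨f, hf⟩ := Module.projective_lifting_property (I • ⊤ : Submodule R N).mkQ
    (e.toLinearMap ∘ₗ (I • ⊤ : Submodule R M).mkQ) (Submodule.mkQ_surjective _)
  have hsurj : Function.Surjective f := f.surjective_of_surjective_comp_mkQ I hI <| by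
    rw [hf]; exact e.surjective.comp (Submodule.mkQ_surjective _)
  obtain ⟨s, hs⟩ := Module.projective_lifting_property f LinearMap.id hsurj
  have hker : LinearMap.ker f ≤ I • ⊤ := fun x hx ↦ by
    have := LinearMap.congr_fun hf x
    simp only [LinearMap.comp_apply, Submodule.mkQ_apply, LinearMap.mem_ker.mp hx,
      Submodule.Quotient.mk_zero, LinearEquiv.coe_coe] at this
    rwa [eq_comm, LinearEquiv.map_eq_zero_iff, Submodule.Quotient.mk_eq_zero] at this
  exact ⟨.ofBijective f ⟨LinearMap.ker_eq_bot.mp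
    (LinearMap.ker_eq_bot_of_ker_le_smul_top hI hs hker), hsurj⟩⟩

theorem nonempty_linearEquiv_of_baseChange [Module.Finite R M] [Module.Projective R M]
    [Module.Finite R N] [Module.Projective R N] (hI : I ≤ (⊥ : Ideal R).jacobson)
    (e : (R ⧸ I) ⊗[R] M ≃ₗ[R ⧸ I] (R ⧸ I) ⊗[R] N) : Nonempty (M ≃ₗ[R] N) :=
  nonempty_linearEquiv_of_quotSMulTop hI <| (quotTensorEquivQuotSMul M I).symm ≪≫ₗ
    e.restrictScalars R ≪≫ₗ quotTensorEquivQuotSMul N I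

end Nakayama

section Matrix
variable {n : Type*} [Fintype n] [DecidableEq n]

theorem Matrix.isNilpotent_of_forall_isNilpotent {R : Type*} [CommSemiring R] (A : Matrix n n R)
    (hA : ∀ i j, IsNilpotent (A i j)) : IsNilpotent A := by
  set J : Ideal R := Ideal.span (Set.range fun p : n × n ↦ A p.1 p.2)
  obtain ⟨m, hm⟩ : IsNilpotent J :=
    (Ideal.FG.isNilpotent_iff_le_nilradical (Submodule.fg_span (Set.finite_range _))).mpr <|
      Ideal.span_le.mpr <| by rintro _ ⟨p, rfl⟩; exact hA p.1 p.2
  have hpow : ∀ k i j, (A ^ k) i j ∈ J ^ k := by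
    intro k
    induction k with
    | zero => simp [Ideal.one_eq_top]
    | succ k ih =>
      intro i j
      rw [pow_succ A, Matrix.mul_apply, pow_succ J]
      exact Ideal.sum_mem _ fun c _ ↦
        Ideal.mul_mem_mul (ih i c) (Ideal.subset_span ⟨(c, j), rfl⟩)
  refine ⟨m, Matrix.ext fun i j ↦ ?_⟩
  simpa [hm] using hpow m i j

theorem Matrix.exists_isIdempotentElem_map_eq {R : Type*} [CommRing R] {I : Ideal R}
    (hI : I ≤ nilradical R) (q : Matrix n n (R ⧸ I)) (hq : IsIdempotentElem q) :
    ∃ E : Matrix n n R, IsIdempotentElem E ∧ E.map (Ideal.Quotient.mk I) = q := by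
  have hker (A : Matrix n n R) (hA : A ∈ RingHom.ker ((Ideal.Quotient.mk I).mapMatrix (m := n))) :
      IsNilpotent A :=
    A.isNilpotent_of_forall_isNilpotent fun i j ↦ hI <| Ideal.Quotient.eq_zero_iff_mem.mp <| by
      simpa using Matrix.ext_iff.mpr (RingHom.mem_ker.mp hA) i j
  have hrange : q ∈ (Ideal.Quotient.mk I).mapMatrix.range :=
    ⟨q.map (Function.surjInv Ideal.Quotient.mk_surjective), by
      ext i j; exact Function.surjInv_eq Ideal.Quotient.mk_surjective _⟩
  exact exists_isIdempotentElem_eq_of_ker_isNilpotent _ hker q hrange hq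

end Matrix

section Retract
variable {S M N : Type*} [Semiring S] [AddCommMonoid M] [Module S M]
  [AddCommMonoid N] [Module S N]

theorem LinearMap.nonempty_linearEquiv_range_comp {i : N →ₗ[S] M} {p : M →ₗ[S] N}
    (h : p ∘ₗ i = LinearMap.id) : Nonempty (N ≃ₗ[S] LinearMap.range (i ∘ₗ p)) := by
  have hp : LinearMap.range p = ⊤ :=
    LinearMap.range_eq_top.mpr fun n ↦ ⟨i n, LinearMap.congr_fun h n⟩
  rw [LinearMap.range_comp_of_range_eq_top i hp]
  exact ⟨.ofLeftInverse (g := p) (LinearMap.congr_fun h)⟩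

theorem LinearMap.rangeRestrict_comp_subtype_range {g : Module.End S M}
    (hg : IsIdempotentElem g) :
    g.rangeRestrict ∘ₗ (LinearMap.range g).subtype = LinearMap.id := by
  ext ⟨_, y, rfl⟩ : 1
  exact Subtype.ext (LinearMap.congr_fun hg y)

theorem Module.Projective.exists_isIdempotentElem_range [Module.Finite S N]
    [Module.Projective S N] :
    ∃ (k : ℕ) (q : Module.End S (Fin k → S)), IsIdempotentElem q ∧
      Nonempty (N ≃ₗ[S] LinearMap.range q) := by
  obtain ⟨k, π, hπ⟩ := Module.Finite.exists_fin' S N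
  obtain ⟨σ, hσ⟩ := Module.projective_lifting_property π LinearMap.id hπ
  refine ⟨k, σ ∘ₗ π, LinearMap.ext fun x ↦ congrArg σ (LinearMap.congr_fun hσ (π x)),
    LinearMap.nonempty_linearEquiv_range_comp hσ⟩

end Retract

section BaseChange
variable {R : Type*} [CommSemiring R] (A : Type*) [CommSemiring A] [Algebra R A]

theorem LinearMap.nonempty_baseChange_range_linearEquiv {M : Type*} [AddCommMonoid M]
    [Module R M] {g : Module.End R M} (hg : IsIdempotentElem g) :
    Nonempty (A ⊗[R] LinearMap.range g ≃ₗ[A] LinearMap.range (g.baseChange A)) := by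
  have := LinearMap.nonempty_linearEquiv_range_comp
    (i := (LinearMap.range g).subtype.baseChange A) (p := g.rangeRestrict.baseChange A) <| by
      rw [← LinearMap.baseChange_comp, LinearMap.rangeRestrict_comp_subtype_range hg,
        LinearMap.baseChange_id]
  rwa [← LinearMap.baseChange_comp, LinearMap.subtype_comp_codRestrict] at this

theorem TensorProduct.piScalarRight_baseChange_toLin' {ι : Type*} [Fintype ι] [DecidableEq ι]
    (E : Matrix ι ι R) (x : A ⊗[R] (ι → R)) :
    piScalarRight R A A ι ((Matrix.toLin' E).baseChange A x) =
      Matrix.toLin' (E.map (algebraMap R A)) (piScalarRight R A A ι x) := by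
  induction x using TensorProduct.induction_on with
  | zero => simp
  | tmul a v =>
    ext j
    simp only [LinearMap.baseChange_tmul, piScalarRight_apply, piScalarRightHom_tmul,
      Matrix.toLin'_apply, Matrix.mulVec, dotProduct, Matrix.map_apply, Finset.sum_smul]
    refine Finset.sum_congr rfl fun i _ ↦ ?_
    rw [mul_smul, _root_.Algebra.smul_def]
  | add x y hx hy => simp only [map_add, hx, hy]

theorem Matrix.nonempty_baseChange_range_toLin' {ι : Type*} [Fintype ι] [DecidableEq ι]
    {E : Matrix ι ι R} (hE : IsIdempotentElem E) :
    Nonempty (A ⊗[R] LinearMap.range (Matrix.toLin' E) ≃ₗ[A]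
      LinearMap.range (Matrix.toLin' (E.map (algebraMap R A)))) := by
  obtain ⟨e⟩ := LinearMap.nonempty_baseChange_range_linearEquiv A (hE.map Matrix.toLinAlgEquiv')
  let c := piScalarRight R A A ι
  have hc : (LinearMap.range ((Matrix.toLin' E).baseChange A)).map c.toLinearMap =
      LinearMap.range (Matrix.toLin' (E.map (algebraMap R A))) := by
    rw [← LinearMap.range_comp, show c.toLinearMap ∘ₗ (Matrix.toLin' E).baseChange A =
        Matrix.toLin' (E.map (algebraMap R A)) ∘ₗ c.toLinearMap from
      LinearMap.ext (piScalarRight_baseChange_toLin' A E),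
      LinearMap.range_comp_of_range_eq_top _ (LinearMap.range_eq_top.mpr c.surjective)]
  exact ⟨e ≪≫ₗ c.submoduleMap _ ≪≫ₗ LinearEquiv.ofEq _ _ hc⟩

end BaseChange

theorem exists_finite_projective_baseChange_linearEquiv {R : Type*} [CommRing R] {I : Ideal R}
    (hI : I ≤ nilradical R) (P : Type*) [AddCommGroup P] [Module (R ⧸ I) P]
    [Module.Finite (R ⧸ I) P] [Module.Projective (R ⧸ I) P] :
    ∃ (k : ℕ) (M : Submodule R (Fin k → R)), Module.Finite R M ∧ Module.Projective R M ∧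
      Nonempty ((R ⧸ I) ⊗[R] M ≃ₗ[R ⧸ I] P) := by
  obtain ⟨k, q, hq, ⟨eP⟩⟩ :=
    Module.Projective.exists_isIdempotentElem_range (S := R ⧸ I) (N := P)
  obtain ⟨E, hE, hEq⟩ :=
    Matrix.exists_isIdempotentElem_map_eq hI _ (hq.map LinearMap.toMatrixAlgEquiv')
  refine ⟨k, LinearMap.range (Matrix.toLin' E), inferInstance,
    .of_split _ _ (LinearMap.rangeRestrict_comp_subtype_range (hE.map Matrix.toLinAlgEquiv')), ?_⟩
  obtain ⟨e⟩ := Matrix.nonempty_baseChange_range_toLin' (R ⧸ I) hE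
  rw [Ideal.Quotient.algebraMap_eq, hEq] at e
  have hq_range : LinearMap.range (Matrix.toLin' (LinearMap.toMatrixAlgEquiv' q)) =
      LinearMap.range q :=
    congrArg LinearMap.range (Matrix.toLinAlgEquiv'_toMatrixAlgEquiv' q)
  exact ⟨e ≪≫ₗ LinearEquiv.ofEq _ _ hq_range ≪≫ₗ eP.symm⟩

theorem stmt19 {R : Type u} [CommRing R] (I : Ideal R)
    (hJ : I ≤ (⊥ : Ideal R).jacobson) :
    (∀ M N : ModuleCat.{u} R, IsInvertibleModule R M → IsInvertibleModule R N →
      Nonempty (((R ⧸ I) ⊗[R] M) ≃ₗ[R ⧸ I] ((R ⧸ I) ⊗[R] N)) →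
      Nonempty (M ≃ₗ[R] N)) ∧
    (I ≤ nilradical R →
      ∀ P : ModuleCat.{u} (R ⧸ I), IsInvertibleModule (R ⧸ I) P →
        ∃ M : ModuleCat.{u} R, IsInvertibleModule R M ∧
          Nonempty (((R ⧸ I) ⊗[R] M) ≃ₗ[R ⧸ I] P)) := by
  refine ⟨fun M N ⟨_, ⟨eM⟩⟩ ⟨_, ⟨eN⟩⟩ ⟨e⟩ ↦ ?_,
    fun hnil P ⟨Q, ⟨ePQ⟩⟩ ↦ ?_⟩
  · have := Module.Invertible.left eM
    have := Module.Invertible.left eN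
    exact nonempty_linearEquiv_of_baseChange hJ e
  · have := Module.Invertible.left ePQ
    have := Module.Invertible.right ePQ
    obtain ⟨_, M, _, _, ⟨eM⟩⟩ := exists_finite_projective_baseChange_linearEquiv hnil P
    obtain ⟨_, N, _, _, ⟨eN⟩⟩ := exists_finite_projective_baseChange_linearEquiv hnil Q
    obtain ⟨eMN⟩ := nonempty_linearEquiv_of_baseChange (M := M ⊗[R] N) (N := R) hJ <|
      AlgebraTensorModule.distribBaseChange R (R ⧸ I) M N ≪≫ₗ congr eM eN ≪≫ₗ
        ePQ ≪≫ₗ (AlgebraTensorModule.rid R (R ⧸ I) (R ⧸ I)).symm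
    exact ⟨.of R M, ⟨.of R N, ⟨eMN⟩⟩, ⟨eM⟩⟩
end
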